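/- Let V be a finite-dimensional real vector space, ω : V × V → ℝ a skew-symmetric bilinear form, and Δ ⊆ V a linear subspace. Define D := {(v, α) ∈ V × V* : v ∈ Δ and α(w) = ω(v, w) for all w ∈ Δ}. Then D is a Dirac structure, i.e. D coincides with its orthogonal complement with respect to the symmetric pairing ⟨⟨(u, α), (v, β)⟩⟩ := β(u) + α(v): a pair (v, β) ∈ V × V* belongs to D if and only if β(u) + α(v) = 0 for every (u, α) ∈ D. -/
import Mathlib

/-- For a skew-symmetric bilinear form `ω` on a finite-dimensional real
vector space `V` and a linear subspace `Δ ⊆ V`, the set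
`D = {(v, α) | v ∈ Δ ∧ ∀ w ∈ Δ, α w = ω v w}` is a Dirac structure: `(v, β) ∈ D` iff
`β u + α v = 0` for every `(u, α) ∈ D`. -/
theorem statement0 (V : Type*) [AddCommGroup V] [Module ℝ V] [FiniteDimensional ℝ V]
    (ω : V →ₗ[ℝ] V →ₗ[ℝ] ℝ) (hω : ∀ u w : V, ω u w = - ω w u)
    (Δ : Submodule ℝ V)
    (D : Set (V × Module.Dual ℝ V))
    (hD : D = {p : V × Module.Dual ℝ V | p.1 ∈ Δ ∧ ∀ w ∈ Δ, p.2 w = ω p.1 w})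
    (v : V) (β : Module.Dual ℝ V) :
    (v, β) ∈ D ↔ ∀ (u : V) (α : Module.Dual ℝ V), (u, α) ∈ D → β u + α v = 0 := by
  subst hD
  constructor
  · rintro ⟨hv, hβ⟩ u α ⟨hu, hα⟩
    rw [hβ u hu, hα v hv, hω v u]
    ring
  · intro h
    have hvΔ : v ∈ Δ := by
      by_contra hv
      obtain ⟨f, hf, hmap⟩ := Δ.exists_dual_map_eq_bot_of_notMem hv inferInstance
      have h0 : ((0 : V), f) ∈ {p : V × Module.Dual ℝ V | p.1 ∈ Δ ∧ ∀ w ∈ Δ, p.2 w = ω p.1 w} := by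
        refine ⟨Δ.zero_mem, fun w hw => ?_⟩
        have : f w ∈ Δ.map f := Submodule.mem_map_of_mem hw
        rw [hmap] at this
        simpa using this
      have := h 0 f h0
      simp at this
      exact hf this
    refine ⟨hvΔ, fun w hw => ?_⟩
    have hw0 : ((w : V), ω w) ∈ {p : V × Module.Dual ℝ V | p.1 ∈ Δ ∧ ∀ u ∈ Δ, p.2 u = ω p.1 u} := ⟨hw, fun _ _ => rfl⟩
    have := h w (ω w) hw0
    rw [hω w v] at this
    linarith
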